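/- Suppose f and each g_j (j ∈ [q]) are differentiable on ℝ^d. Fix dual variables λ_{i,j}, μ_i ∈ ℝ and penalty parameters ρ_{i,j} > 0, ϱ_i > 0. Then the map δ ↦ L(δ, Λ, μ, P, p) is differentiable at every δ ∈ ℝ^d, with gradient ∇_δ L = δ + Σ_{i=1}^n Σ_{j=1}^q max{0, λ_{i,j} + ρ_{i,j}·(g_j(x_i+δ) − b_j)}·∇g_j(x_i+δ) + Σ_{i=1}^n max{0, μ_i + ϱ_i·(y·f(x_i+δ) − c)}·y·∇f(x_i+δ). -/

import Mathlib

/-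
Each penalty term `u ↦ λ·max{u, −λ/ρ} + (ρ/2)·max{u, −λ/ρ}²` equals
`(max{0, λ + ρu}² − λ²)/(2ρ)`, and `s ↦ max{0, s}²` is differentiable with derivative
`2·max{0, s}` (its remainder at `t` is bounded by `(s − t)²`). So every penalty term is
differentiable in `u` with derivative `max{0, λ + ρu}`, and the gradient of `L` follows from the
chain rule and linearity of the gradient.
-/

theorem abs_max_zero_sq_sub_le (s t : ℝ) :
    |max 0 s ^ 2 - max 0 t ^ 2 - 2 * max 0 t * (s - t)| ≤ (s - t) ^ 2 := by
  rw [abs_le]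
  rcases le_total 0 s with hs | hs <;> rcases le_total 0 t with ht | ht <;>
    simp only [max_eq_left, max_eq_right, hs, ht] <;> constructor <;> nlinarith

theorem hasDerivAt_max_zero_sq (t : ℝ) :
    HasDerivAt (fun s : ℝ => max 0 s ^ 2) (2 * max 0 t) t := by
  have hrem : HasFDerivAt (fun s : ℝ => max 0 s ^ 2 - max 0 t ^ 2 - 2 * max 0 t * (s - t))
      (0 : ℝ →L[ℝ] ℝ) t := by
    refine Asymptotics.IsBigO.hasFDerivAt (n := 2)
      (Asymptotics.IsBigO.of_bound 1 (.of_forall fun s => ?_)) one_lt_two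
    simpa [Real.norm_eq_abs, sq_abs] using abs_max_zero_sq_sub_le s t
  have htan : HasDerivAt (fun s : ℝ => max 0 t ^ 2 + 2 * max 0 t * (s - t)) (2 * max 0 t) t := by
    simpa using (((hasDerivAt_id t).sub_const t).const_mul (2 * max 0 t)).const_add (max 0 t ^ 2)
  refine ((hrem.hasDerivAt.add htan).congr_deriv (by simp)).congr_of_eventuallyEq
    (.of_forall fun s => ?_)
  simp only [Pi.add_apply]
  ring

noncomputable def augmentedPenalty (l r u : ℝ) : ℝ :=
  l * max u (-l / r) + r / 2 * max u (-l / r) ^ 2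

theorem augmentedPenalty_eq {l r : ℝ} (hr : 0 < r) (u : ℝ) :
    augmentedPenalty l r u = (max 0 (l + r * u) ^ 2 - l ^ 2) / (2 * r) := by
  unfold augmentedPenalty
  rcases le_total 0 (l + r * u) with h | h
  · have hu : -l / r ≤ u := by rw [div_le_iff₀ hr]; linarith
    rw [max_eq_left hu, max_eq_right h]
    field_simp
    ring
  · have hu : u ≤ -l / r := by rw [le_div_iff₀ hr]; linarith
    rw [max_eq_right hu, max_eq_left h]
    field_simp
    ring

theorem hasDerivAt_augmentedPenalty {l r : ℝ} (hr : 0 < r) (u : ℝ) :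
    HasDerivAt (augmentedPenalty l r) (max 0 (l + r * u)) u := by
  have hlin : HasDerivAt (fun v : ℝ => l + r * v) r u := by
    simpa using ((hasDerivAt_id u).const_mul r).const_add l
  have h := (((hasDerivAt_max_zero_sq _).comp u hlin).sub_const (l ^ 2)).div_const (2 * r)
  exact (h.congr_deriv (by field_simp)).congr_of_eventuallyEq
    (.of_forall (augmentedPenalty_eq hr))

section Gradient

variable {F : Type*} [NormedAddCommGroup F] [InnerProductSpace ℝ F] [CompleteSpace F]
  {u v : F → ℝ} {u' v' x : F}

theorem HasGradientAt.add (hu : HasGradientAt u u' x) (hv : HasGradientAt v v' x) :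
    HasGradientAt (fun z => u z + v z) (u' + v') x := by
  rw [hasGradientAt_iff_hasFDerivAt, map_add]
  exact HasFDerivAt.add hu hv

theorem HasGradientAt.sum {ι : Type*} (s : Finset ι) {u : ι → F → ℝ} {u' : ι → F}
    (h : ∀ i ∈ s, HasGradientAt (u i) (u' i) x) :
    HasGradientAt (fun z => ∑ i ∈ s, u i z) (∑ i ∈ s, u' i) x := by
  rw [hasGradientAt_iff_hasFDerivAt, map_sum]
  exact HasFDerivAt.fun_sum h

theorem HasGradientAt.sub_const (hu : HasGradientAt u u' x) (c : ℝ) :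
    HasGradientAt (fun z => u z - c) u' x :=
  (hasFDerivAt_sub_const_iff c).2 hu

theorem HasGradientAt.const_mul (hu : HasGradientAt u u' x) (c : ℝ) :
    HasGradientAt (fun z => c * u z) (c • u') x := by
  rw [hasGradientAt_iff_hasFDerivAt, map_smul]
  exact HasFDerivAt.const_mul hu c

theorem HasDerivAt.comp_hasGradientAt {φ : ℝ → ℝ} {φ' : ℝ} (hφ : HasDerivAt φ φ' (u x))
    (hu : HasGradientAt u u' x) : HasGradientAt (fun z => φ (u z)) (φ' • u') x := by
  rw [hasGradientAt_iff_hasFDerivAt, map_smul]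
  exact hφ.comp_hasFDerivAt x hu

theorem Differentiable.hasGradientAt_comp_add_left (hu : Differentiable ℝ u)
    (a x : F) : HasGradientAt (fun z => u (a + z)) (gradient u (a + x)) x :=
  (hasFDerivAt_comp_add_left a).2 (hu (a + x)).hasGradientAt

theorem hasGradientAt_half_mul_norm_sq (x : F) :
    HasGradientAt (fun z : F => 1 / 2 * ‖z‖ ^ 2) x x := by
  refine ((hasStrictFDerivAt_norm_sq x).hasFDerivAt.const_mul (1 / 2 : ℝ)).congr_fderiv ?_
  ext w
  simp

theorem HasGradientAt.augmentedPenalty {l r : ℝ} (hr : 0 < r) (hu : HasGradientAt u u' x) :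
    HasGradientAt (fun z => augmentedPenalty l r (u z)) (max 0 (l + r * u x) • u') x :=
  (hasDerivAt_augmentedPenalty hr (u x)).comp_hasGradientAt hu

end Gradient

theorem stmt_8_general {d n q : ℕ}
    (x : Fin n → EuclideanSpace ℝ (Fin d)) (y : ℝ)
    (f : EuclideanSpace ℝ (Fin d) → ℝ) (hf : Differentiable ℝ f)
    (g : Fin q → EuclideanSpace ℝ (Fin d) → ℝ) (hg : ∀ j, Differentiable ℝ (g j))
    (b : Fin q → ℝ) (c : ℝ)
    (Λ : Fin n → Fin q → ℝ) (μ : Fin n → ℝ)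
    (P : Fin n → Fin q → ℝ) (hP : ∀ i j, 0 < P i j)
    (p : Fin n → ℝ) (hp : ∀ i, 0 < p i)
    (L : EuclideanSpace ℝ (Fin d) → ℝ)
    (hL : ∀ δ : EuclideanSpace ℝ (Fin d),
      L δ = (1 / 2) * ‖δ‖ ^ 2
        + ∑ i, ∑ j, Λ i j * max (g j (x i + δ) - b j) (-Λ i j / P i j)
        + ∑ i, μ i * max (y * f (x i + δ) - c) (-μ i / p i)
        + (1 / 2) * ∑ i, ∑ j, P i j * (max (g j (x i + δ) - b j) (-Λ i j / P i j)) ^ 2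
        + (1 / 2) * ∑ i, p i * (max (y * f (x i + δ) - c) (-μ i / p i)) ^ 2) :
    ∀ δ : EuclideanSpace ℝ (Fin d),
      HasGradientAt L
        (δ + (∑ i, ∑ j, max 0 (Λ i j + P i j * (g j (x i + δ) - b j)) •
                gradient (g j) (x i + δ))
           + ∑ i, (max 0 (μ i + p i * (y * f (x i + δ) - c)) * y) •
                gradient f (x i + δ)) δ := by
  have hL' : L = fun δ => 1 / 2 * ‖δ‖ ^ 2
      + ∑ i, ∑ j, augmentedPenalty (Λ i j) (P i j) (g j (x i + δ) - b j)
      + ∑ i, augmentedPenalty (μ i) (p i) (y * f (x i + δ) - c) := by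
    funext δ
    simp only [hL, augmentedPenalty, Finset.sum_add_distrib, Finset.mul_sum]
    ring_nf
  intro δ
  rw [hL']
  simp only [mul_smul]
  refine ((hasGradientAt_half_mul_norm_sq δ).add
    (HasGradientAt.sum _ fun i _ => HasGradientAt.sum _ fun j _ => ?_)).add
    (HasGradientAt.sum _ fun i _ => ?_)
  · exact ((hg j).hasGradientAt_comp_add_left (x i) δ |>.sub_const (b j)).augmentedPenalty
      (hP i j)
  · exact ((hf.hasGradientAt_comp_add_left (x i) δ).const_mul y |>.sub_const c).augmentedPenalty
      (hp i)

/-- Primal gradient of the universal augmented Lagrangian: if `f` and all `g_j` are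
differentiable, then for fixed dual and penalty variables the map `δ ↦ L(δ, Λ, μ, P, p)` is
differentiable everywhere, with gradient
`δ + Σ_{i,j} max{0, λ_{i,j} + ρ_{i,j}(g_j(x_i+δ) − b_j)}·∇g_j(x_i+δ)
   + Σ_i max{0, μ_i + ϱ_i(y·f(x_i+δ) − c)}·y·∇f(x_i+δ)`. -/
theorem stmt_8 {d n q : ℕ}
    (x : Fin n → EuclideanSpace ℝ (Fin d)) (y : ℝ) (hy : y = 1 ∨ y = -1)
    (f : EuclideanSpace ℝ (Fin d) → ℝ) (hf : Differentiable ℝ f)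
    (g : Fin q → EuclideanSpace ℝ (Fin d) → ℝ) (hg : ∀ j, Differentiable ℝ (g j))
    (b : Fin q → ℝ) (c : ℝ)
    (Λ : Fin n → Fin q → ℝ) (μ : Fin n → ℝ)
    (P : Fin n → Fin q → ℝ) (hP : ∀ i j, 0 < P i j)
    (p : Fin n → ℝ) (hp : ∀ i, 0 < p i)
    (L : EuclideanSpace ℝ (Fin d) → ℝ)
    (hL : ∀ δ : EuclideanSpace ℝ (Fin d),
      L δ = (1 / 2) * ‖δ‖ ^ 2
        + ∑ i, ∑ j, Λ i j * max (g j (x i + δ) - b j) (-Λ i j / P i j)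
        + ∑ i, μ i * max (y * f (x i + δ) - c) (-μ i / p i)
        + (1 / 2) * ∑ i, ∑ j, P i j * (max (g j (x i + δ) - b j) (-Λ i j / P i j)) ^ 2
        + (1 / 2) * ∑ i, p i * (max (y * f (x i + δ) - c) (-μ i / p i)) ^ 2) :
    ∀ δ : EuclideanSpace ℝ (Fin d),
      HasGradientAt L
        (δ + (∑ i, ∑ j, max 0 (Λ i j + P i j * (g j (x i + δ) - b j)) •
                gradient (g j) (x i + δ))
           + ∑ i, (max 0 (μ i + p i * (y * f (x i + δ) - c)) * y) •
                gradient f (x i + δ)) δ :=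
  stmt_8_general x y f hf g hg b c Λ μ P hP p hp L hL
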